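/- Let 0 < π₁ < π₂, c, c₁, c₂ > 0, 0 ≤ p̲ ≤ p̄ ≤ 1, and set x_c = −(π₂²/(2c₂) − π₁²/(2c₁))/(π₂ − π₁), ā = p̄π₁ + (1−p̄)π₂, a̲ = p̲π₁ + (1−p̲)π₂ (note ā ≤ a̲). Define f(x) = (1/2)cx² + max_{p∈[p̲,p̄]}[ p(−π₁²/(2c₁) − π₁x) + (1−p)(−π₂²/(2c₂) − π₂x) ]. Then the minimizer of f over x ≥ 0 is: ā/c if x_c ≤ ā/c; x_c if ā/c ≤ x_c ≤ a̲/c; and a̲/c if a̲/c ≤ x_c. In other words, the optimal first-stage production is the clamp of x_c to the interval [ā/c, a̲/c]. -/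
import Mathlib

lemma ssup_lin (A B pl pu : ℝ) (h : pl ≤ pu) :
    sSup {v : ℝ | ∃ p ∈ Set.Icc pl pu, v = p * A + (1-p) * B}
      = max (pl * A + (1-pl) * B) (pu * A + (1-pu) * B) := by
  apply IsGreatest.csSup_eq
  constructor
  · rcases le_total A B with hab | hab
    · have hmx : max (pl * A + (1-pl) * B) (pu * A + (1-pu) * B)
          = pl * A + (1-pl) * B := by
        apply max_eq_left
        nlinarith [mul_nonneg (sub_nonneg.mpr h) (sub_nonneg.mpr hab)]
      rw [hmx]
      exact ⟨pl, ⟨le_refl _, h⟩, rfl⟩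
    · have hmx : max (pl * A + (1-pl) * B) (pu * A + (1-pu) * B)
          = pu * A + (1-pu) * B := by
        apply max_eq_right
        nlinarith [mul_nonneg (sub_nonneg.mpr h) (sub_nonneg.mpr hab)]
      rw [hmx]
      exact ⟨pu, ⟨h, le_refl _⟩, rfl⟩
  · rintro v ⟨p, ⟨h1, h2⟩, rfl⟩
    rcases le_total A B with hab | hab
    · refine le_max_of_le_left ?_
      nlinarith [mul_nonneg (sub_nonneg.mpr h1) (sub_nonneg.mpr hab)]
    · refine le_max_of_le_right ?_
      nlinarith [mul_nonneg (sub_nonneg.mpr h2) (sub_nonneg.mpr hab)]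

lemma quad_min (c a x : ℝ) (hc : 0 < c) :
    (1/2)*c*(a/c)^2 - a*(a/c) ≤ (1/2)*c*x^2 - a*x := by
  have h : (1/2)*c*x^2 - a*x - ((1/2)*c*(a/c)^2 - a*(a/c)) = (c*x - a)^2/(2*c) := by
    field_simp
    ring
  have h2 : (0:ℝ) ≤ (c*x - a)^2/(2*c) :=
    div_nonneg (sq_nonneg _) (by linarith)
  linarith

/-- The producer's optimal first-stage production is the clamp of `x_c` to the
interval `[ā/c, a̲/c]`. -/
theorem stmt_10 (π₁ π₂ c c₁ c₂ pl pu : ℝ)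
    (hπ₁ : 0 < π₁) (hπ : π₁ < π₂)
    (hc : 0 < c) (hc₁ : 0 < c₁) (hc₂ : 0 < c₂)
    (hpl : 0 ≤ pl) (hp : pl ≤ pu) (hpu : pu ≤ 1)
    (xc abar alow : ℝ)
    (hxc : xc = -(π₂^2/(2*c₂) - π₁^2/(2*c₁))/(π₂ - π₁))
    (habar : abar = pu * π₁ + (1-pu) * π₂)
    (halow : alow = pl * π₁ + (1-pl) * π₂)
    (f : ℝ → ℝ)
    (hf : ∀ x : ℝ, f x = (1/2) * c * x^2 +
      sSup {v : ℝ | ∃ p ∈ Set.Icc pl pu,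
        v = p * (-(π₁^2/(2*c₁)) - π₁ * x) + (1-p) * (-(π₂^2/(2*c₂)) - π₂ * x)})
    (xopt : ℝ) (hxopt : xopt = min (max xc (abar/c)) (alow/c)) :
    0 ≤ xopt ∧
    (∀ x : ℝ, 0 ≤ x → f xopt ≤ f x) ∧
    (xc ≤ abar/c → xopt = abar/c) ∧
    (abar/c ≤ xc → xc ≤ alow/c → xopt = xc) ∧
    (alow/c ≤ xc → xopt = alow/c) := by
  have hne : π₂ - π₁ ≠ 0 := sub_ne_zero.mpr (ne_of_gt hπ)
  have habar0 : 0 ≤ abar := by nlinarith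
  have halow0 : 0 ≤ alow := by nlinarith
  have hba : abar ≤ alow := by nlinarith
  have hbac : abar/c ≤ alow/c := by gcongr
  -- clean expression of f as a max of two quadratics
  obtain ⟨Kl, hKl⟩ : ∃ K : ℝ, K = pl * (-(π₁^2/(2*c₁))) + (1-pl) * (-(π₂^2/(2*c₂))) := ⟨_, rfl⟩
  obtain ⟨Ku, hKu⟩ : ∃ K : ℝ, K = pu * (-(π₁^2/(2*c₁))) + (1-pu) * (-(π₂^2/(2*c₂))) := ⟨_, rfl⟩
  have hfm : ∀ y : ℝ, f y = max ((1/2)*c*y^2 - alow*y + Kl) ((1/2)*c*y^2 - abar*y + Ku) := by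
    intro y
    rw [hf y, ssup_lin _ _ _ _ hp, ← max_add_add_left, habar, halow, hKl, hKu]
    congr 1 <;> ring
  obtain ⟨S, hS⟩ : ∃ s : ℝ, s = (pu - pl) * (π₂ - π₁) := ⟨_, rfl⟩
  have hS0 : 0 ≤ S := hS ▸ mul_nonneg (by linarith) (by linarith)
  have hKd : Kl - Ku = S * xc := by
    rw [hKl, hKu, hS, hxc]
    field_simp
    ring
  have halowdiff : alow - abar = S := by rw [habar, halow, hS]; ring
  -- the three regime identities
  have part3 : xc ≤ abar/c → xopt = abar/c := by
    intro h
    rw [hxopt, max_eq_right h, min_eq_left hbac]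
  have part4 : abar/c ≤ xc → xc ≤ alow/c → xopt = xc := by
    intro h1 h2
    rw [hxopt, max_eq_left h1, min_eq_left h2]
  have part5 : alow/c ≤ xc → xopt = alow/c := by
    intro h
    rw [hxopt, max_eq_left (le_trans hbac h), min_eq_right h]
  have hxopt0 : 0 ≤ xopt := by
    rw [hxopt]
    refine le_min (le_trans ?_ (le_max_right _ _)) ?_ <;>
      exact div_nonneg (by assumption) hc.le
  refine ⟨hxopt0, ?_, part3, part4, part5⟩
  intro x _
  rw [hfm x, hfm xopt]
  rcases le_or_gt xc (abar/c) with h1 | h1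
  · -- xopt = abar/c, upper branch active
    have hx1 : xopt = abar/c := part3 h1
    have hxoptge : xc ≤ xopt := hx1 ▸ h1
    have key : alow * xopt - abar * xopt = S * xopt := by rw [← sub_mul, halowdiff]
    have hSle : S * xc ≤ S * xopt := mul_le_mul_of_nonneg_left hxoptge hS0
    have hL : (1/2)*c*xopt^2 - alow*xopt + Kl ≤ (1/2)*c*xopt^2 - abar*xopt + Ku := by
      linarith
    refine le_trans (le_of_eq (max_eq_right hL)) (le_trans ?_ (le_max_right _ _))
    rw [hx1]
    have := quad_min c abar x hc
    linarith
  · rcases le_or_gt xc (alow/c) with h2 | h2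
    · -- xopt = xc, both branches equal at xopt
      have hx1 : xopt = xc := part4 h1.le h2
      rw [hx1]
      have key : alow * xc - abar * xc = S * xc := by rw [← sub_mul, halowdiff]
      have heq : (1/2)*c*xc^2 - alow*xc + Kl = (1/2)*c*xc^2 - abar*xc + Ku := by
        linarith
      rcases le_total x xc with hxle | hxge
      · have hcx : xc * c ≤ alow := (le_div_iff₀ hc).mp h2
        have hmx : max ((1/2)*c*xc^2 - alow*xc + Kl) ((1/2)*c*xc^2 - abar*xc + Ku)
            = (1/2)*c*xc^2 - alow*xc + Kl := max_eq_left (le_of_eq heq.symm)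
        rw [hmx]
        refine le_trans ?_ (le_max_left _ _)
        linarith [mul_nonneg (sub_nonneg.mpr hxle) (sub_nonneg.mpr hcx),
          mul_nonneg hc.le (sq_nonneg (x - xc))]
      · have hcx : abar ≤ xc * c := by
          have := (div_le_iff₀ hc).mp h1.le
          linarith
        have hmx : max ((1/2)*c*xc^2 - alow*xc + Kl) ((1/2)*c*xc^2 - abar*xc + Ku)
            = (1/2)*c*xc^2 - abar*xc + Ku := max_eq_right (le_of_eq heq)
        rw [hmx]
        refine le_trans ?_ (le_max_right _ _)
        linarith [mul_nonneg (sub_nonneg.mpr hxge) (sub_nonneg.mpr hcx),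
          mul_nonneg hc.le (sq_nonneg (x - xc))]
    · -- xopt = alow/c, lower branch active
      have hx1 : xopt = alow/c := part5 h2.le
      have hxople : xopt ≤ xc := hx1 ▸ h2.le
      have key : alow * xopt - abar * xopt = S * xopt := by rw [← sub_mul, halowdiff]
      have hSle : S * xopt ≤ S * xc := mul_le_mul_of_nonneg_left hxople hS0
      have hU : (1/2)*c*xopt^2 - abar*xopt + Ku ≤ (1/2)*c*xopt^2 - alow*xopt + Kl := by
        linarith
      refine le_trans (le_of_eq (max_eq_left hU)) (le_trans ?_ (le_max_left _ _))
      rw [hx1]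
      have := quad_min c alow x hc
      linarith
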